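/- Let p(x; σ) = (p * φ_σ)(x) be the convolution of a probability density p on R^n with the Gaussian density φ_σ of N(0, σ² I). Then for σ > 0, ∇_x log p(x; σ) = (E[X0 | X_σ = x] − x) / σ², where X_σ = X0 + σ ε with X0 ~ p and ε ~ N(0, I) independent (Tweedie's formula). -/

import Mathlib

set_option maxHeartbeats 1000000
set_option synthInstance.maxHeartbeats 1000000


open MeasureTheory Real

/-- Isotropic Gaussian density `N(u; 0, σ² I)` on `ℝⁿ`. -/
noncomputable def gaussDensity (n : ℕ) (σ : ℝ) (u : EuclideanSpace ℝ (Fin n)) : ℝ :=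
  (2 * π * σ ^ 2) ^ (-(n : ℝ) / 2) * Real.exp (-‖u‖ ^ 2 / (2 * σ ^ 2))

section aux

variable {n : ℕ} {σ : ℝ}

lemma gauss_pos (hσ : 0 < σ) (u : EuclideanSpace ℝ (Fin n)) : 0 < gaussDensity n σ u := by
  unfold gaussDensity
  positivity

lemma gauss_le (hσ : 0 < σ) (u : EuclideanSpace ℝ (Fin n)) :
    gaussDensity n σ u ≤ (2 * π * σ ^ 2) ^ (-(n : ℝ) / 2) := by
  unfold gaussDensity
  have h1 : Real.exp (-‖u‖ ^ 2 / (2 * σ ^ 2)) ≤ 1 := by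
    rw [Real.exp_le_one_iff]
    have : (0:ℝ) < 2 * σ ^ 2 := by positivity
    rw [div_nonpos_iff]
    right
    constructor
    · nlinarith [sq_nonneg ‖u‖]
    · linarith
  have h2 : (0:ℝ) < (2 * π * σ ^ 2) ^ (-(n : ℝ) / 2) := by positivity
  nlinarith

lemma gauss_mul_norm_le (hσ : 0 < σ) (u : EuclideanSpace ℝ (Fin n)) :
    gaussDensity n σ u * ‖u‖ ≤ (2 * π * σ ^ 2) ^ (-(n : ℝ) / 2) * σ := by
  unfold gaussDensity
  set c := (2 * π * σ ^ 2) ^ (-(n : ℝ) / 2) with hc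
  have hcpos : 0 < c := by rw [hc]; positivity
  set t := ‖u‖ with ht
  have htn : 0 ≤ t := norm_nonneg _
  have key : Real.exp (-t ^ 2 / (2 * σ ^ 2)) * t ≤ σ := by
    have hE := Real.add_one_le_exp (t ^ 2 / (2 * σ ^ 2))
    have hEpos := Real.exp_pos (t ^ 2 / (2 * σ ^ 2))
    rw [neg_div, Real.exp_neg]
    rw [inv_mul_le_iff₀ hEpos]
    have h1 : t ^ 2 / (2 * σ ^ 2) + 1 ≤ Real.exp (t ^ 2 / (2 * σ ^ 2)) := hE
    have h2 : t ≤ σ * (t ^ 2 / (2 * σ ^ 2) + 1) := by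
      rw [mul_add, mul_one]
      have h3 : σ * (t ^ 2 / (2 * σ ^ 2)) = t ^ 2 / (2 * σ) := by
        field_simp
      rw [h3, div_add' _ _ _ (by positivity : (2:ℝ) * σ ≠ 0), le_div_iff₀ (by positivity)]
      nlinarith [sq_nonneg (t - σ)]
    nlinarith
  calc c * Real.exp (-t ^ 2 / (2 * σ ^ 2)) * t
      = c * (Real.exp (-t ^ 2 / (2 * σ ^ 2)) * t) := by ring
    _ ≤ c * σ := by nlinarith

lemma gauss_continuous (hσ : 0 < σ) : Continuous (gaussDensity n σ) := by
  unfold gaussDensity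
  fun_prop

lemma gauss_hasFDerivAt (hσ : 0 < σ) (u : EuclideanSpace ℝ (Fin n)) :
    HasFDerivAt (gaussDensity n σ)
      ((-(σ ^ 2)⁻¹ * gaussDensity n σ u) • innerSL ℝ u) u := by
  have h1 : HasFDerivAt (fun v : EuclideanSpace ℝ (Fin n) => ‖v‖ ^ 2)
      (2 • innerSL ℝ u) u := (hasStrictFDerivAt_norm_sq u).hasFDerivAt
  have h2 : HasFDerivAt (fun v : EuclideanSpace ℝ (Fin n) => -‖v‖ ^ 2 / (2 * σ ^ 2))
      ((-(2 * σ ^ 2)⁻¹) • (2 • innerSL ℝ u)) u := by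
    have := h1.const_mul (-(2 * σ ^ 2)⁻¹)
    exact this.congr_of_eventuallyEq (Filter.Eventually.of_forall fun v => by ring)
  have h3 := h2.exp
  have h4 := h3.const_mul ((2 * π * σ ^ 2) ^ (-(n : ℝ) / 2))
  refine (h4.congr_of_eventuallyEq (Filter.Eventually.of_forall fun v => rfl)).congr_fderiv ?_
  ext v
  simp only [gaussDensity, ContinuousLinearMap.coe_smul', Pi.smul_apply,
    ContinuousLinearMap.smul_apply, smul_eq_mul]
  have hσ2 : σ ^ 2 ≠ 0 := by positivity
  field_simp
  ring

end aux

/-- **Tweedie's formula.** Let `p` be a probability density on `ℝⁿ` with finite first moment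
and `p(·; σ) = p * φ_σ` its Gaussian smoothing. Then for `σ > 0`,
`∇ₓ log p(x; σ) = (E[X₀ | X_σ = x] − x) / σ²`, where
`E[X₀ | X_σ = x] = (∫ x₀ • p(x₀) φ_σ(x − x₀) dx₀) / p(x; σ)`. -/
theorem tweedie_formula
    (n : ℕ) (σ : ℝ) (hσ : 0 < σ)
    (p : EuclideanSpace ℝ (Fin n) → ℝ)
    (hp_nonneg : ∀ x, 0 ≤ p x)
    (hp_int : Integrable p)
    (hp_one : ∫ x, p x = 1)
    (hp_moment : Integrable fun x => ‖x‖ * p x)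
    (x : EuclideanSpace ℝ (Fin n)) :
    gradient (fun x' => Real.log (∫ x0, p x0 * gaussDensity n σ (x' - x0))) x
      = (σ ^ 2)⁻¹ •
          ((∫ x0, p x0 * gaussDensity n σ (x - x0))⁻¹ •
              (∫ x0, (p x0 * gaussDensity n σ (x - x0)) • x0) - x) := by
  classical
  set c : ℝ := (2 * π * σ ^ 2) ^ (-(n : ℝ) / 2) with hc
  have hcpos : 0 < c := by rw [hc]; positivity
  have hσ2 : (0:ℝ) < σ ^ 2 := by positivity
  have hpm : AEStronglyMeasurable p volume := hp_int.aestronglyMeasurable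
  have hgc : Continuous (gaussDensity n σ) := gauss_continuous hσ
  -- measurability of the integrand for each x'
  have hFmeas : ∀ x' : EuclideanSpace ℝ (Fin n),
      AEStronglyMeasurable (fun x0 => p x0 * gaussDensity n σ (x' - x0)) volume := by
    intro x'
    exact hpm.mul ((hgc.comp (continuous_const.sub continuous_id)).aestronglyMeasurable)
  -- integrability of the integrand
  have habs : ∀ (x' x0 : EuclideanSpace ℝ (Fin n)),
      ‖p x0 * gaussDensity n σ (x' - x0)‖ = p x0 * gaussDensity n σ (x' - x0) := by
    intro x' x0
    exact Real.norm_of_nonneg (mul_nonneg (hp_nonneg x0) (gauss_pos hσ _).le)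
  have hFint : ∀ x' : EuclideanSpace ℝ (Fin n),
      Integrable (fun x0 => p x0 * gaussDensity n σ (x' - x0)) := by
    intro x'
    refine (hp_int.mul_const c).mono' (hFmeas x') ?_
    filter_upwards with x0
    rw [habs]
    exact mul_le_mul_of_nonneg_left (gauss_le hσ _) (hp_nonneg x0)
  -- the Frechet derivative of the integrand in x'
  set F' : EuclideanSpace ℝ (Fin n) → EuclideanSpace ℝ (Fin n) →
      (EuclideanSpace ℝ (Fin n) →L[ℝ] ℝ) :=
    fun x' x0 => p x0 • ((-(σ ^ 2)⁻¹ * gaussDensity n σ (x' - x0)) • innerSL ℝ (x' - x0))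
    with hF'
  have hdiff : ∀ (x0 x' : EuclideanSpace ℝ (Fin n)),
      HasFDerivAt (fun y => p x0 * gaussDensity n σ (y - x0)) (F' x' x0) x' := by
    intro x0 x'
    have hτ : HasFDerivAt (fun y : EuclideanSpace ℝ (Fin n) => y - x0)
        (ContinuousLinearMap.id ℝ _) x' := (hasFDerivAt_id x').sub_const x0
    have h1 := (gauss_hasFDerivAt hσ (x' - x0)).comp x' hτ
    have h2 := h1.const_mul (p x0)
    simpa [hF', ContinuousLinearMap.comp_id] using h2
  -- norm of the derivative
  have hF'norm : ∀ (x' x0 : EuclideanSpace ℝ (Fin n)),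
      ‖F' x' x0‖ = p x0 * ((σ ^ 2)⁻¹ * (gaussDensity n σ (x' - x0) * ‖x' - x0‖)) := by
    intro x' x0
    simp only [hF']
    rw [norm_smul (p x0) ((-(σ ^ 2)⁻¹ * gaussDensity n σ (x' - x0)) • innerSL ℝ (x' - x0)),
      norm_smul (-(σ ^ 2)⁻¹ * gaussDensity n σ (x' - x0)) (innerSL ℝ (x' - x0)),
      innerSL_apply_norm]
    rw [Real.norm_of_nonneg (hp_nonneg x0), Real.norm_eq_abs, abs_mul, abs_neg, abs_inv,
      abs_of_nonneg hσ2.le, abs_of_nonneg (gauss_pos hσ _).le]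
    ring
  have hbound : ∀ (x' x0 : EuclideanSpace ℝ (Fin n)),
      ‖F' x' x0‖ ≤ p x0 * ((σ ^ 2)⁻¹ * (c * σ)) := by
    intro x' x0
    rw [hF'norm]
    have := gauss_mul_norm_le (n := n) hσ (x' - x0)
    have h2 : (0:ℝ) ≤ (σ ^ 2)⁻¹ := by positivity
    have h3 : (σ ^ 2)⁻¹ * (gaussDensity n σ (x' - x0) * ‖x' - x0‖) ≤ (σ ^ 2)⁻¹ * (c * σ) :=
      mul_le_mul_of_nonneg_left this h2
    exact mul_le_mul_of_nonneg_left h3 (hp_nonneg x0)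
  have hF'meas : AEStronglyMeasurable (fun x0 => F' x x0) volume := by
    have hcont : Continuous (fun x0 : EuclideanSpace ℝ (Fin n) =>
        (-(σ ^ 2)⁻¹ * gaussDensity n σ (x - x0)) • innerSL ℝ (x - x0)) := by
      apply Continuous.fun_smul
      · exact continuous_const.mul (hgc.comp (continuous_const.sub continuous_id))
      · exact (innerSL ℝ).continuous.comp (continuous_const.sub continuous_id)
    exact hpm.smul hcont.aestronglyMeasurable
  -- differentiation under the integral sign
  have hDer : HasFDerivAt (fun x' => ∫ x0, p x0 * gaussDensity n σ (x' - x0))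
      (∫ x0, F' x x0) x := by
    refine hasFDerivAt_integral_of_dominated_of_fderiv_le (s := Metric.ball x 1) (Metric.ball_mem_nhds x one_pos)
      (Filter.Eventually.of_forall fun x' => hFmeas x') (hFint x) hF'meas
      (Filter.Eventually.of_forall fun x0 => ?_)
      (hp_int.mul_const ((σ ^ 2)⁻¹ * (c * σ)))
      (Filter.Eventually.of_forall fun x0 => ?_)
    · intro x' _
      exact hbound x' x0
    · intro x' _
      exact hdiff x0 x'
  -- the gradient vector
  set G0 : EuclideanSpace ℝ (Fin n) → EuclideanSpace ℝ (Fin n) :=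
    fun x0 => p x0 • ((-(σ ^ 2)⁻¹ * gaussDensity n σ (x - x0)) • (x - x0)) with hG0
  have hG0norm : ∀ x0, ‖G0 x0‖ = ‖F' x x0‖ := by
    intro x0
    rw [hF'norm]
    simp only [hG0]
    rw [norm_smul, norm_smul]
    rw [Real.norm_of_nonneg (hp_nonneg x0), Real.norm_eq_abs, abs_mul, abs_neg, abs_inv,
      abs_of_nonneg hσ2.le, abs_of_nonneg (gauss_pos hσ _).le]
    ring
  have hG0meas : AEStronglyMeasurable G0 volume := by
    have hcont : Continuous (fun x0 : EuclideanSpace ℝ (Fin n) =>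
        (-(σ ^ 2)⁻¹ * gaussDensity n σ (x - x0)) • (x - x0)) := by
      apply Continuous.fun_smul
      · exact continuous_const.mul (hgc.comp (continuous_const.sub continuous_id))
      · exact continuous_const.sub continuous_id
    exact hpm.smul hcont.aestronglyMeasurable
  have hG0int : Integrable G0 := by
    refine (hp_int.mul_const ((σ ^ 2)⁻¹ * (c * σ))).mono' hG0meas ?_
    filter_upwards with x0
    rw [hG0norm]
    exact hbound x x0
  have hF'int : Integrable (fun x0 => F' x x0) := by
    refine (hp_int.mul_const ((σ ^ 2)⁻¹ * (c * σ))).mono' hF'meas ?_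
    filter_upwards with x0
    exact hbound x x0
  set G : EuclideanSpace ℝ (Fin n) := ∫ x0, G0 x0 with hG
  have hkey : (∫ x0, F' x x0) = InnerProductSpace.toDual ℝ _ G := by
    apply ContinuousLinearMap.ext
    intro v
    rw [ContinuousLinearMap.integral_apply hF'int]
    have key : ∀ x0, F' x x0 v = inner ℝ v (G0 x0) := by
      intro x0
      simp only [hF', hG0, ContinuousLinearMap.smul_apply, innerSL_apply_apply, smul_eq_mul,
        real_inner_smul_right]
      rw [real_inner_comm]
    simp_rw [key]
    rw [integral_inner hG0int v, InnerProductSpace.toDual_apply_apply, ← hG, real_inner_comm]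
  -- positivity of the smoothed density at x
  have hfpos : 0 < ∫ x0, p x0 * gaussDensity n σ (x - x0) := by
    rw [integral_pos_iff_support_of_nonneg
      (fun x0 => mul_nonneg (hp_nonneg x0) (gauss_pos hσ _).le) (hFint x)]
    have hsupp : (Function.support fun x0 => p x0 * gaussDensity n σ (x - x0))
        = Function.support p := by
      ext x0
      simp only [Function.mem_support, mul_ne_zero_iff]
      exact ⟨fun h => h.1, fun h => ⟨h, (gauss_pos hσ _).ne'⟩⟩
    rw [hsupp]
    by_contra h
    push_neg at h
    have h0 : volume (Function.support p) = 0 := le_antisymm h (zero_le)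
    have hae : p =ᵐ[volume] 0 := by
      rw [Filter.EventuallyEq, ae_iff]
      have hset : {a | ¬ p a = (0 : EuclideanSpace ℝ (Fin n) → ℝ) a} = Function.support p := by
        ext a; simp [Function.mem_support]
      rw [hset]; exact h0
    have : ∫ x0, p x0 = 0 := by
      rw [integral_congr_ae hae]; simp
    rw [hp_one] at this
    exact one_ne_zero this
  -- gradient of the log
  have hGrad : HasGradientAt (fun x' => ∫ x0, p x0 * gaussDensity n σ (x' - x0)) G x := by
    rw [hasGradientAt_iff_hasFDerivAt]
    rw [← hkey]
    exact hDer
  have hLog : HasGradientAt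
      (fun x' => Real.log (∫ x0, p x0 * gaussDensity n σ (x' - x0)))
      ((∫ x0, p x0 * gaussDensity n σ (x - x0))⁻¹ • G) x := by
    rw [hasGradientAt_iff_hasFDerivAt]
    have := (hGrad.hasFDerivAt).log hfpos.ne'
    refine this.congr_fderiv ?_
    apply ContinuousLinearMap.ext
    intro v
    simp [InnerProductSpace.toDual_apply_apply, real_inner_smul_left]
  rw [hLog.gradient]
  -- final algebra
  have hI2 : Integrable (fun x0 => (p x0 * gaussDensity n σ (x - x0)) • x) :=
    (hFint x).smul_const x
  have hI1 : Integrable (fun x0 => (p x0 * gaussDensity n σ (x - x0)) • x0) := by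
    have hmeas : AEStronglyMeasurable
        (fun x0 => (p x0 * gaussDensity n σ (x - x0)) • x0) volume :=
      (hFmeas x).smul aestronglyMeasurable_id
    refine ((hp_moment.const_mul c)).mono' hmeas ?_
    filter_upwards with x0
    rw [norm_smul, habs]
    calc p x0 * gaussDensity n σ (x - x0) * ‖x0‖
        ≤ p x0 * c * ‖x0‖ := by
          apply mul_le_mul_of_nonneg_right _ (norm_nonneg x0)
          exact mul_le_mul_of_nonneg_left (gauss_le hσ _) (hp_nonneg x0)
      _ = c * (‖x0‖ * p x0) := by ring
  have hGeq : G = (σ ^ 2)⁻¹ •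
      ((∫ x0, (p x0 * gaussDensity n σ (x - x0)) • x0)
        - (∫ x0, p x0 * gaussDensity n σ (x - x0)) • x) := by
    rw [hG]
    have heq : ∀ x0, G0 x0 = (σ ^ 2)⁻¹ •
        ((p x0 * gaussDensity n σ (x - x0)) • x0
          - (p x0 * gaussDensity n σ (x - x0)) • x) := by
      intro x0
      simp only [hG0]
      module
    simp_rw [heq]
    rw [integral_smul, integral_sub hI1 hI2, integral_smul_const]
  rw [hGeq]
  rw [smul_comm ((∫ x0, p x0 * gaussDensity n σ (x - x0))⁻¹) ((σ ^ 2)⁻¹)]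
  congr 1
  rw [smul_sub, inv_smul_smul₀ hfpos.ne']
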